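/- arXiv:2504.18395 — 4 statements merged into one kernel-verified Lean document; each statement's English description precedes it below -/
import Mathlib

section
/- Let Γ be a property with convex level sets on distributions over a finite outcome set Y, and let f be a distributional predictor with finitely many distinct prediction values that is perfectly distribution calibrated with respect to Γ (for every γ in the image of Γ∘f and every y ∈ Y, the conditional probability of Y=y given Γ∘f(X)=γ equals the conditional expectation of f_y(X) given Γ∘f(X)=γ). Then Γ∘f is Γ-calibrated: for every γ in the image of Γ∘f, Γ applied to the conditional distribution of Y given Γ∘f(X)=γ equals γ. -/
/-!
Condition on the event `A = {Γ ∘ f = γ}`. The conditional law of `Y` is the mean of `f` under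
`μ[|A]`, and on `A` the predictor only takes the finitely many values `v ∈ range f` with
`Γ v = γ`. A mean of finitely many points of the convex level set `Γ⁻¹ γ ∩ Δ(Y)` stays in it.

Since `f` is not assumed measurable, the calibration identity could hold through the junk value
`∫ = 0` of a non-integrable function. This is ruled out because the outer probabilities of the
fibres `{Y = y}` add up to at least `1`, so the integrals of the `f_y`, which add up pointwise
to `1`, must all be genuine.
-/

open MeasureTheory ProbabilityTheory Finset

section

variable {Ω : Type*} [MeasurableSpace Ω] {ν : Measure Ω} [IsProbabilityMeasure ν]

lemma one_le_sum_measureReal_preimage_singleton {ι : Type*} [Fintype ι] (φ : Ω → ι) :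
    1 ≤ ∑ i, ν.real (φ ⁻¹' {i}) :=
  calc (1 : ℝ) = ν.real (⋃ i, φ ⁻¹' {i}) := by
        simp [← Set.preimage_iUnion, Set.iUnion_of_singleton]
    _ ≤ ∑ i, ν.real (φ ⁻¹' {i}) := measureReal_iUnion_fintype_le _

lemma integrable_of_sum_eq_one_of_one_le_sum_integral {ι : Type*} [Fintype ι]
    {g : ι → Ω → ℝ} (hg₀ : ∀ i ω, 0 ≤ g i ω) (hg₁ : ∀ ω, ∑ i, g i ω = 1)
    (h : 1 ≤ ∑ i, ∫ ω, g i ω ∂ν) (i : ι) : Integrable (g i) ν := by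
  classical
  set T := univ.filter fun j => Integrable (g j) ν
  have hT_int : Integrable (fun ω => ∑ j ∈ T, g j ω) ν :=
    integrable_finsetSum T fun j hj => (mem_filter.1 hj).2
  have hT_le : ∀ ω, ∑ j ∈ T, g j ω ≤ 1 := fun ω =>
    hg₁ ω ▸ sum_le_sum_of_subset_of_nonneg (subset_univ T) fun j _ _ => hg₀ j ω
  have hsum : ∑ j, ∫ ω, g j ω ∂ν = ∫ ω, ∑ j ∈ T, g j ω ∂ν := by
    rw [integral_finsetSum T fun j hj => (mem_filter.1 hj).2,
      ← sum_subset (subset_univ T) fun j _ hj => integral_undef (by simpa [T] using hj)]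
  have hT_one : (fun ω => ∑ j ∈ T, g j ω) =ᵐ[ν] 1 := by
    refine (integral_eq_iff_of_ae_le hT_int (integrable_const 1) (ae_of_all _ hT_le)).1 ?_
    refine le_antisymm (integral_mono hT_int (integrable_const 1) hT_le) ?_
    simpa [← hsum] using h
  by_contra hi
  have hiT : i ∉ T := by simpa [T] using hi
  have hgi : g i =ᵐ[ν] 0 := by
    filter_upwards [hT_one] with ω hω
    have := sum_le_sum_of_subset_of_nonneg (subset_univ (insert i T)) fun j _ _ => hg₀ j ω
    rw [sum_insert hiT, hg₁ ω] at this
    exact le_antisymm (by simp_all) (hg₀ i ω)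
  exact hi ((integrable_zero Ω ℝ ν).congr hgi.symm)

lemma Convex.integral_mem_of_ae_mem_finite {E : Type*} [NormedAddCommGroup E]
    [NormedSpace ℝ E] [CompleteSpace E] {s V : Set E} (hs : Convex ℝ s) (hV : V.Finite)
    (hVs : V ⊆ s) {F : Ω → E} (hF : ∀ᵐ ω ∂ν, F ω ∈ V) (hFi : Integrable F ν) :
    ∫ ω, F ω ∂ν ∈ s :=
  convexHull_min hVs hs <| (convex_convexHull ℝ (s := V)).integral_mem
    (hV.isCompact_convexHull ℝ).isClosed (hF.mono fun _ h => subset_convexHull ℝ V h) hFi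

omit [IsProbabilityMeasure ν] in
lemma ae_cond_mem_of_nullMeasurableSet_cond [IsFiniteMeasure ν] {s : Set Ω} (hs : ν s ≠ 0)
    (h : NullMeasurableSet s ν[|s]) : ∀ᵐ ω ∂ν[|s], ω ∈ s := by
  have := cond_isProbabilityMeasure hs
  rw [ae_mem_iff_measure_eq h, cond_apply_self hs (measure_ne_top _ _),
    measure_univ]

end

/-- Perfect distribution calibration w.r.t. Γ (with convex level sets)
implies Γ-calibration of Γ∘f. -/
theorem distribution_calibration_implies_gamma_calibration
    {X Y R : Type*} [MeasurableSpace X] [MeasurableSpace Y] [Fintype Y]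
    (μ : Measure (X × Y)) [IsProbabilityMeasure μ]
    (f : X → Y → ℝ) (hf : ∀ x, f x ∈ stdSimplex ℝ Y) (hfin : (Set.range f).Finite)
    (Γ : (Y → ℝ) → R)
    (hconv : ∀ γ : R, Convex ℝ {p | p ∈ stdSimplex ℝ Y ∧ Γ p = γ})
    (hpos : ∀ γ ∈ Set.range (fun x => Γ (f x)), μ {z | Γ (f z.1) = γ} ≠ 0)
    (hcal : ∀ γ ∈ Set.range (fun x => Γ (f x)), ∀ y : Y,
      (μ[|{z | Γ (f z.1) = γ}] (Prod.snd ⁻¹' {y})).toReal =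
        ∫ z, f z.1 y ∂(μ[|{z | Γ (f z.1) = γ}])) :
    ∀ γ ∈ Set.range (fun x => Γ (f x)),
      Γ (fun y => (μ[|{z | Γ (f z.1) = γ}] (Prod.snd ⁻¹' {y})).toReal) = γ := by
  intro γ hγ
  set A := {z : X × Y | Γ (f z.1) = γ}
  have := cond_isProbabilityMeasure (hpos γ hγ)
  have hint : ∀ y, Integrable (fun z => f z.1 y) μ[|A] :=
    integrable_of_sum_eq_one_of_one_le_sum_integral (fun y z => (hf z.1).1 y)
      (fun z => (hf z.1).2) ((one_le_sum_measureReal_preimage_singleton Prod.snd).trans_eq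
        (sum_congr rfl fun y _ => hcal γ hγ y))
  set V := {v ∈ Set.range f | Γ v = γ}
  have hV : V.Finite := hfin.subset fun _ hv => hv.1
  have hA : A = (fun z => f z.1) ⁻¹' V := by ext; simp [A, V]
  have hA_null : NullMeasurableSet A μ[|A] :=
    hA ▸ (Integrable.of_eval hint).aemeasurable.nullMeasurableSet_preimage hV.measurableSet
  have hae : ∀ᵐ z ∂μ[|A], f z.1 ∈ V :=
    (ae_cond_mem_of_nullMeasurableSet_cond (hpos γ hγ) hA_null).mono
      fun z hz => ⟨⟨z.1, rfl⟩, hz⟩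
  have hmean := (hconv γ).integral_mem_of_ae_mem_finite hV
    (fun v ⟨⟨x, hx⟩, hv⟩ => ⟨hx ▸ hf x, hv⟩) hae (Integrable.of_eval hint)
  convert hmean.2 using 2
  funext y
  rw [eval_integral hint]
  exact hcal γ hγ y
end

section
/- Let V be an oriented identification function for Γ: P → R ⊆ ℝ that is locally Lipschitz with parameter M, i.e., |E_{Y∼P}[V(Y,γ)]| ≤ M·|γ − Γ(P)| for all P ∈ P and γ ∈ R. Then the induced loss ℓ(y,γ) = ∫_{γ₀}^γ V(y,r) dr + κ(y) satisfies |E_{Y∼P}[ℓ(Y,γ)] − E_{Y∼P}[ℓ(Y,Γ(P))]| ≤ (M/2)·(γ − Γ(P))² for all P ∈ P and γ ∈ R. -/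
/-!
By Fubini, the difference of the expected losses at `γ` and at `Γ(P)` is
`∫_{Γ(P)}^γ V(P, r) dr`. The segment between `Γ(P)` and `γ` lies in the interval `R`, so the
Lipschitz bound `|V(P, r)| ≤ M |r - Γ(P)|` holds along it, and integrates to `M/2 (γ - Γ(P))²`.
-/

open MeasureTheory Function Set
open scoped Interval

instance isFiniteMeasure_restrict_uIoc (a b : ℝ) : IsFiniteMeasure (volume.restrict (Ι a b)) :=
  inferInstanceAs (IsFiniteMeasure (volume.restrict (Ioc _ _)))

noncomputable def inducedLoss {Y : Type*} (V : Y → ℝ → ℝ) (γ₀ : ℝ) (κ : Y → ℝ) (y : Y) (γ : ℝ) :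
    ℝ :=
  (∫ r in γ₀..γ, V y r) + κ y

section BoundedKernel

variable {Y : Type*} [MeasurableSpace Y] {V : Y → ℝ → ℝ} {C : ℝ}

lemma integrable_uncurry_of_abs_le (hmeas : Measurable (uncurry V)) (hbdd : ∀ y r, |V y r| ≤ C)
    (μ : Measure (Y × ℝ)) [IsFiniteMeasure μ] : Integrable (uncurry V) μ :=
  .of_bound hmeas.aestronglyMeasurable C (.of_forall fun p => hbdd p.1 p.2)

lemma intervalIntegrable_of_abs_le (hmeas : Measurable (uncurry V)) (hbdd : ∀ y r, |V y r| ≤ C)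
    (y : Y) (a b : ℝ) : IntervalIntegrable (V y) volume a b :=
  (intervalIntegrable_iff.2 <| IntegrableOn.of_bound measure_Ioc_lt_top
    (hmeas.comp measurable_prodMk_left).aestronglyMeasurable C (.of_forall (hbdd y)))

lemma integral_intervalIntegral_comm_of_abs_le (hmeas : Measurable (uncurry V))
    (hbdd : ∀ y r, |V y r| ≤ C) (μ : Measure Y) [IsFiniteMeasure μ] (a b : ℝ) :
    ∫ y, (∫ r in a..b, V y r) ∂μ = ∫ r in a..b, ∫ y, V y r ∂μ := by
  exact (intervalIntegral_integral_swap (f := fun r y => V y r)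
    (integrable_uncurry_of_abs_le hmeas hbdd (μ.prod (volume.restrict (Ι a b)))).swap).symm

lemma integrable_intervalIntegral_of_abs_le (hmeas : Measurable (uncurry V))
    (hbdd : ∀ y r, |V y r| ≤ C) (μ : Measure Y) [IsFiniteMeasure μ] (a b : ℝ) :
    Integrable (fun y => ∫ r in a..b, V y r) μ := by
  simp_rw [intervalIntegral.intervalIntegral_eq_integral_uIoc]
  exact ((integrable_uncurry_of_abs_le hmeas hbdd
    (μ.prod (volume.restrict (Ι a b)))).integral_prod_left).const_mul _

lemma integral_inducedLoss_sub_integral_inducedLoss (hmeas : Measurable (uncurry V))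
    (hbdd : ∀ y r, |V y r| ≤ C) (μ : Measure Y) [IsFiniteMeasure μ] {κ : Y → ℝ}
    (hκ : Integrable κ μ) (c a b : ℝ) :
    ∫ y, inducedLoss V c κ y b ∂μ - ∫ y, inducedLoss V c κ y a ∂μ =
      ∫ r in a..b, ∫ y, V y r ∂μ := by
  have hb := integrable_intervalIntegral_of_abs_le hmeas hbdd μ c b
  have ha := integrable_intervalIntegral_of_abs_le hmeas hbdd μ c a
  unfold inducedLoss
  rw [integral_add hb hκ, integral_add ha hκ, add_sub_add_right_eq_sub, ← integral_sub hb ha,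
    ← integral_intervalIntegral_comm_of_abs_le hmeas hbdd]
  congr 1 with y
  exact intervalIntegral.integral_interval_sub_left (intervalIntegrable_of_abs_le hmeas hbdd y c b)
    (intervalIntegrable_of_abs_le hmeas hbdd y c a)

end BoundedKernel

theorem abs_intervalIntegral_le_of_abs_le_mul_abs_sub {f : ℝ → ℝ} {a b M : ℝ}
    (h : ∀ r ∈ Ι a b, |f r| ≤ M * |r - a|) : |∫ r in a..b, f r| ≤ M / 2 * (b - a) ^ 2 := by
  have hg : IntegrableOn (fun r => M * |r - a|) (Ι a b) :=
    (Continuous.intervalIntegrable (by fun_prop) a b).def'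
  calc |∫ r in a..b, f r| = ‖∫ r in Ι a b, f r‖ := intervalIntegral.abs_intervalIntegral_eq ..
    _ ≤ ∫ r in Ι a b, M * |r - a| :=
      norm_integral_le_of_norm_le hg ((ae_restrict_iff' measurableSet_uIoc).2 (.of_forall h))
    _ = M / 2 * (b - a) ^ 2 := by
      have := integral_pow_abs_sub_uIoc (a := a) (b := b) 1
      norm_num at this
      rw [integral_const_mul, this]
      ring

theorem induced_loss_hoelder_smooth_general
    {Y : Type*} [MeasurableSpace Y]
    (Pcal : Set (Measure Y)) (hprob : ∀ P ∈ Pcal, IsProbabilityMeasure P)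
    (R : Set ℝ) (hR : R.OrdConnected)
    (Γ : Measure Y → ℝ) (hΓR : ∀ P ∈ Pcal, Γ P ∈ R)
    (V : Y → ℝ → ℝ) (C : ℝ) (hbdd : ∀ y r, |V y r| ≤ C)
    (hmeas : Measurable (Function.uncurry V))
    (M : ℝ)
    (hlip : ∀ P ∈ Pcal, ∀ γ ∈ R, |∫ y, V y γ ∂P| ≤ M * |γ - Γ P|)
    (γ₀ : ℝ)
    (κ : Y → ℝ) (hκ : ∀ P ∈ Pcal, Integrable κ P) :
    ∀ P ∈ Pcal, ∀ γ ∈ R,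
      |(∫ y, ((∫ r in γ₀..γ, V y r) + κ y) ∂P) -
        ∫ y, ((∫ r in γ₀..(Γ P), V y r) + κ y) ∂P| ≤ M / 2 * (γ - Γ P) ^ 2 := by
  intro P hP γ hγ
  have := hprob P hP
  calc _ = |∫ r in Γ P..γ, ∫ y, V y r ∂P| :=
        congrArg abs (integral_inducedLoss_sub_integral_inducedLoss hmeas hbdd P (hκ P hP) γ₀ _ _)
    _ ≤ M / 2 * (γ - Γ P) ^ 2 := abs_intervalIntegral_le_of_abs_le_mul_abs_sub fun r hr =>
        hlip P hP r (hR.uIcc_subset (hΓR P hP) hγ (uIoc_subset_uIcc hr))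

/-- If the oriented identification function V is locally Lipschitz with
parameter M, the induced loss is locally Hölder-smooth with parameters (M/2, 2). -/
theorem induced_loss_hoelder_smooth
    {Y : Type*} [MeasurableSpace Y]
    (Pcal : Set (Measure Y)) (hprob : ∀ P ∈ Pcal, IsProbabilityMeasure P)
    (R : Set ℝ) (hR : R.OrdConnected)
    (Γ : Measure Y → ℝ) (hΓR : ∀ P ∈ Pcal, Γ P ∈ R)
    (V : Y → ℝ → ℝ) (C : ℝ) (hbdd : ∀ y r, |V y r| ≤ C)
    (hmeas : Measurable (Function.uncurry V))
    (horiented : ∀ P ∈ Pcal, ∀ γ ∈ R, (0 < ∫ y, V y γ ∂P ↔ Γ P < γ))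
    (M : ℝ)
    (hlip : ∀ P ∈ Pcal, ∀ γ ∈ R, |∫ y, V y γ ∂P| ≤ M * |γ - Γ P|)
    (γ₀ : ℝ) (hγ₀ : ∃ P ∈ Pcal, Γ P = γ₀)
    (κ : Y → ℝ) (hκ : ∀ P ∈ Pcal, Integrable κ P) :
    ∀ P ∈ Pcal, ∀ γ ∈ R,
      |(∫ y, ((∫ r in γ₀..γ, V y r) + κ y) ∂P) -
        ∫ y, ((∫ r in γ₀..(Γ P), V y r) + κ y) ∂P| ≤ M / 2 * (γ - Γ P) ^ 2 :=
  induced_loss_hoelder_smooth_general Pcal hprob R hR Γ hΓR V C hbdd hmeas M hlip γ₀ κ hκ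
end

section
/- Let V be an oriented identification function for Γ: P → R ⊆ ℝ that is locally non-constant with parameter N, i.e., N·|γ − Γ(P)| ≤ |E_{Y∼P}[V(Y,γ)]| for all P ∈ P and γ ∈ R. Then the induced loss ℓ(y,γ) = ∫_{γ₀}^γ V(y,r) dr + κ(y) satisfies (N/2)·(γ − Γ(P))² ≤ |E_{Y∼P}[ℓ(Y,γ)] − E_{Y∼P}[ℓ(Y,Γ(P))]| for all P ∈ P and γ ∈ R. -/
/-!
Writing `F r = E_P[V(Y, r)]`, Fubini turns the excess expected loss into `∫_{Γ(P)}^γ F`. By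
orientation `F` has the sign of `r - Γ(P)`, so local non-constancy reads `F r ≥ N (r - Γ(P))` to
the right of `Γ(P)` and `F r ≤ N (r - Γ(P))` to the left; in both cases integrating from `Γ(P)` to
`γ` gives at least `∫_{Γ(P)}^γ N (r - Γ(P)) dr = N/2 (γ - Γ(P))²`.
-/

open MeasureTheory Set Function
open scoped Interval

section IntervalFubini

variable {α E : Type*} [MeasurableSpace α] [NormedAddCommGroup E] [NormedSpace ℝ E]
  {μ : Measure α} [SFinite μ] {f : ℝ → α → E} {a b : ℝ}

theorem MeasureTheory.Integrable.intervalIntegral_prod_right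
    (hf : Integrable (uncurry f) ((volume.restrict (Ι a b)).prod μ)) :
    Integrable (fun y => ∫ x in a..b, f x y) μ := by
  simp_rw [intervalIntegral.intervalIntegral_eq_integral_uIoc]
  exact hf.integral_prod_right.smul _

theorem MeasureTheory.Integrable.intervalIntegrable_integral_prod_left
    (hf : Integrable (uncurry f) ((volume.restrict (Ι a b)).prod μ)) :
    IntervalIntegrable (fun x => ∫ y, f x y ∂μ) volume a b :=
  (intervalIntegrable_iff).2 hf.integral_prod_left

end IntervalFubini

theorem integrable_uncurry_swap_of_abs_le {Y : Type*} [MeasurableSpace Y] {V : Y → ℝ → ℝ}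
    {C : ℝ} (hV : Measurable (uncurry V)) (hbdd : ∀ y r, |V y r| ≤ C)
    (P : Measure Y) [IsFiniteMeasure P] (a b : ℝ) :
    Integrable (uncurry fun r y => V y r) ((volume.restrict (Ι a b)).prod P) := by
  have : IsFiniteMeasure (volume.restrict (Ι a b)) :=
    isFiniteMeasure_restrict.2 measure_Ioc_lt_top.ne
  exact Integrable.of_bound (hV.comp measurable_swap).aestronglyMeasurable C
    (ae_of_all _ fun p => hbdd p.2 p.1)

theorem half_mul_sq_le_intervalIntegral {F : ℝ → ℝ} {N m γ : ℝ}
    (hF : IntervalIntegrable F volume m γ)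
    (hright : ∀ r ∈ Ioo m γ, N * (r - m) ≤ F r) (hleft : ∀ r ∈ Ioo γ m, F r ≤ N * (r - m)) :
    N / 2 * (γ - m) ^ 2 ≤ ∫ r in m..γ, F r := by
  have hlin : ∫ r in m..γ, N * (r - m) = N / 2 * (γ - m) ^ 2 := by
    rw [intervalIntegral.integral_comp_sub_right (fun x => N * x) m, sub_self,
      intervalIntegral.integral_const_mul, integral_id]
    ring
  have hlin_int : ∀ a b, IntervalIntegrable (fun r => N * (r - m)) volume a b := fun _ _ =>
    (continuous_const.mul (continuous_id.sub continuous_const)).intervalIntegrable _ _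
  rw [← hlin]
  rcases le_total m γ with hle | hle
  · exact intervalIntegral.integral_mono_on_of_le_Ioo hle (hlin_int m γ) hF hright
  · rw [intervalIntegral.integral_symm, intervalIntegral.integral_symm γ, neg_le_neg_iff]
    exact intervalIntegral.integral_mono_on_of_le_Ioo hle hF.symm (hlin_int γ m) hleft

section Oriented

variable {F N m r : ℝ}

theorem mul_sub_le_of_pos_iff (hor : 0 < F ↔ m < r) (hnc : N * |r - m| ≤ |F|) (hr : m < r) :
    N * (r - m) ≤ F := by
  rwa [abs_of_pos (hor.2 hr), abs_of_pos (sub_pos.2 hr)] at hnc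

theorem le_mul_sub_of_pos_iff (hor : 0 < F ↔ m < r) (hnc : N * |r - m| ≤ |F|) (hr : r < m) :
    F ≤ N * (r - m) := by
  have hF : F ≤ 0 := not_lt.1 fun hF => (hor.1 hF).not_gt hr
  rw [abs_of_nonpos hF, abs_of_neg (sub_neg.2 hr)] at hnc
  linarith

end Oriented

theorem induced_loss_anti_hoelder_smooth_general
    {Y : Type*} [MeasurableSpace Y]
    (Pcal : Set (Measure Y)) (hprob : ∀ P ∈ Pcal, IsProbabilityMeasure P)
    (R : Set ℝ) (hR : R.OrdConnected)
    (Γ : Measure Y → ℝ) (hΓR : ∀ P ∈ Pcal, Γ P ∈ R)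
    (V : Y → ℝ → ℝ) (C : ℝ) (hbdd : ∀ y r, |V y r| ≤ C)
    (hmeas : Measurable (Function.uncurry V))
    (horiented : ∀ P ∈ Pcal, ∀ γ ∈ R, (0 < ∫ y, V y γ ∂P ↔ Γ P < γ))
    (N : ℝ)
    (hnc : ∀ P ∈ Pcal, ∀ γ ∈ R, N * |γ - Γ P| ≤ |∫ y, V y γ ∂P|)
    (γ₀ : ℝ)
    (κ : Y → ℝ) (hκ : ∀ P ∈ Pcal, Integrable κ P) :
    ∀ P ∈ Pcal, ∀ γ ∈ R,
      N / 2 * (γ - Γ P) ^ 2 ≤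
        |(∫ y, ((∫ r in γ₀..γ, V y r) + κ y) ∂P) -
          ∫ y, ((∫ r in γ₀..(Γ P), V y r) + κ y) ∂P| := by
  intro P hP γ hγ
  have := hprob P hP
  have hint := integrable_uncurry_swap_of_abs_le hmeas hbdd P
  have hloss a := (hint γ₀ a).intervalIntegral_prod_right
  have hexcess : ((∫ y, ((∫ r in γ₀..γ, V y r) + κ y) ∂P) -
      ∫ y, ((∫ r in γ₀..(Γ P), V y r) + κ y) ∂P) = ∫ r in Γ P..γ, ∫ y, V y r ∂P := by
    rw [integral_add (hloss γ) (hκ P hP), integral_add (hloss (Γ P)) (hκ P hP),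
      add_sub_add_right_eq_sub, ← intervalIntegral_integral_swap (hint γ₀ γ),
      ← intervalIntegral_integral_swap (hint γ₀ (Γ P)),
      intervalIntegral.integral_interval_sub_left (hint γ₀ γ).intervalIntegrable_integral_prod_left
        (hint γ₀ (Γ P)).intervalIntegrable_integral_prod_left]
  rw [hexcess]
  refine (half_mul_sq_le_intervalIntegral (hint (Γ P) γ).intervalIntegrable_integral_prod_left
    (fun r hr => ?_) (fun r hr => ?_)).trans (le_abs_self _)
  · have hrR : r ∈ R := hR.out (hΓR P hP) hγ ⟨hr.1.le, hr.2.le⟩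
    exact mul_sub_le_of_pos_iff (horiented P hP r hrR) (hnc P hP r hrR) hr.1
  · have hrR : r ∈ R := hR.out hγ (hΓR P hP) ⟨hr.1.le, hr.2.le⟩
    exact le_mul_sub_of_pos_iff (horiented P hP r hrR) (hnc P hP r hrR) hr.2

/-- If the oriented identification function V is locally non-constant with
parameter N, the induced loss is locally anti Hölder-smooth with parameters (N/2, 2). -/
theorem induced_loss_anti_hoelder_smooth
    {Y : Type*} [MeasurableSpace Y]
    (Pcal : Set (Measure Y)) (hprob : ∀ P ∈ Pcal, IsProbabilityMeasure P)
    (R : Set ℝ) (hR : R.OrdConnected)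
    (Γ : Measure Y → ℝ) (hΓR : ∀ P ∈ Pcal, Γ P ∈ R)
    (V : Y → ℝ → ℝ) (C : ℝ) (hbdd : ∀ y r, |V y r| ≤ C)
    (hmeas : Measurable (Function.uncurry V))
    (horiented : ∀ P ∈ Pcal, ∀ γ ∈ R, (0 < ∫ y, V y γ ∂P ↔ Γ P < γ))
    (N : ℝ)
    (hnc : ∀ P ∈ Pcal, ∀ γ ∈ R, N * |γ - Γ P| ≤ |∫ y, V y γ ∂P|)
    (γ₀ : ℝ) (hγ₀ : ∃ P ∈ Pcal, Γ P = γ₀)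
    (κ : Y → ℝ) (hκ : ∀ P ∈ Pcal, Integrable κ P) :
    ∀ P ∈ Pcal, ∀ γ ∈ R,
      N / 2 * (γ - Γ P) ^ 2 ≤
        |(∫ y, ((∫ r in γ₀..γ, V y r) + κ y) ∂P) -
          ∫ y, ((∫ r in γ₀..(Γ P), V y r) + κ y) ∂P| :=
  induced_loss_anti_hoelder_smooth_general Pcal hprob R hR Γ hΓR V C hbdd hmeas horiented N hnc γ₀ κ
    hκ
end

section
/- Let Y = {0,1}, let D be a joint distribution on X × Y, and f: X → [0,1] a mean-predictor with finite image whose infimum f_inf over im f is strictly positive. Then f matches the average (E_D[Y − f(X)] = 0) if and only if f is perfectly decision calibrated with respect to the simple loss ℓ_{f_inf/2}, i.e., E_D[ℓ_q(Y, Φ_q(f(X))) − E_{Ŷ∼Bernoulli(f(X))}[ℓ_q(Ŷ, Φ_q(f(X)))]] = 0 for q = f_inf/2. -/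
open MeasureTheory ProbabilityTheory

/-- The simple (cost-weighted misclassification) loss with parameter q,
with action `true` = "a" and action `false` = "b". -/
noncomputable def simpleLoss (q : ℝ) (y c : Bool) : ℝ :=
  q * (if y = false ∧ c = true then 1 else 0) +
    (1 - q) * (if y = true ∧ c = false then 1 else 0)

/-- The property elicited by the simple loss: action "a" iff P(Y=1) > q. -/
noncomputable def simpleProp (q p : ℝ) : Bool := if q < p then true else false

/-- For a mean-predictor with finite image and strictly positive infimum
f_inf, matching the average is equivalent to perfect decision calibration with respect to
the simple loss ℓ_{f_inf/2}. -/
theorem matching_average_iff_decision_calibrated_simple_loss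
    {X : Type*} [MeasurableSpace X]
    (μ : Measure (X × Bool)) [IsProbabilityMeasure μ]
    (f : X → ℝ) (hf01 : ∀ x, f x ∈ Set.Icc (0:ℝ) 1)
    (hfin : (Set.range f).Finite) (hinf : 0 < sInf (Set.range f)) :
    (∫ z, ((if z.2 then (1:ℝ) else 0) - f z.1) ∂μ = 0) ↔
    (∫ z, (simpleLoss (sInf (Set.range f) / 2) z.2
        (simpleProp (sInf (Set.range f) / 2) (f z.1)) -
      (f z.1 * simpleLoss (sInf (Set.range f) / 2) true
          (simpleProp (sInf (Set.range f) / 2) (f z.1)) +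
        (1 - f z.1) * simpleLoss (sInf (Set.range f) / 2) false
          (simpleProp (sInf (Set.range f) / 2) (f z.1)))) ∂μ = 0) := by
  set q : ℝ := sInf (Set.range f) / 2 with hq
  have hq0 : 0 < q := by positivity
  have hprop : ∀ x, simpleProp q (f x) = true := by
    intro x
    have hle : sInf (Set.range f) ≤ f x := csInf_le hfin.bddBelow ⟨x, rfl⟩
    have : q < f x := by
      have : q < sInf (Set.range f) := by rw [hq]; linarith
      linarith
    simp [simpleProp, this]
  have hkey : ∀ z : X × Bool,
      (simpleLoss q z.2 (simpleProp q (f z.1)) -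
        (f z.1 * simpleLoss q true (simpleProp q (f z.1)) +
          (1 - f z.1) * simpleLoss q false (simpleProp q (f z.1)))) =
      -q * ((if z.2 then (1:ℝ) else 0) - f z.1) := by
    intro z
    rw [hprop z.1]
    cases z.2 <;> simp [simpleLoss] <;> ring
  simp only [hkey]
  rw [MeasureTheory.integral_const_mul]
  constructor
  · intro h; rw [h]; ring
  · intro h
    rcases mul_eq_zero.mp h with h' | h'
    · exfalso; nlinarith
    · exact h'
end
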